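/- arXiv:2006.05197 — 8 statements merged into one kernel-verified Lean document; each statement's English description precedes it below -/
import Mathlib

section
/- A symmetric n×n matrix D with zero diagonal is a Euclidean distance matrix if and only if xᵀDx ≤ 0 for all x with eᵀx = 0, where e is the all-ones vector. -/
open Finset Matrix

theorem EDM_characterization
    (n : ℕ) (D : Matrix (Fin n) (Fin n) ℝ)
    (hsymm : D.IsSymm) (hdiag : ∀ i, D i i = 0) :
    (∃ (k : ℕ) (p : Fin n → EuclideanSpace ℝ (Fin k)),
        ∀ i j, D i j = dist (p i) (p j) ^ 2) ↔
      (∀ x : Fin n → ℝ, (∑ i, x i) = 0 →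
        dotProduct x (D.mulVec x) ≤ 0) := by
  constructor
  · rintro ⟨k, p, hp⟩ x hx
    set q : EuclideanSpace ℝ (Fin k) := ∑ j, x j • p j with hq
    have hD : ∀ i j, D i j = ‖p i‖ ^ 2 + ‖p j‖ ^ 2 - 2 * (inner ℝ (p i) (p j) : ℝ) := by
      intro i j
      rw [hp i j, dist_eq_norm, norm_sub_sq_real]; ring
    have hmv : ∀ i, (D.mulVec x) i =
        (∑ j, ‖p j‖ ^ 2 * x j) - 2 * (inner ℝ (p i) q : ℝ) := by
      intro i
      simp only [Matrix.mulVec, dotProduct, hq, inner_sum, real_inner_smul_right]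
      rw [Finset.mul_sum, ← Finset.sum_sub_distrib]
      have : ∑ j, (‖p i‖ ^ 2 * x j) = 0 := by
        rw [← Finset.mul_sum, hx, mul_zero]
      rw [← add_zero (∑ j, (‖p j‖^2 * x j - _)), ← this, ← Finset.sum_add_distrib]
      refine Finset.sum_congr rfl fun j _ => ?_
      rw [hD i j]; ring
    have hqq : (inner ℝ q q : ℝ) = ∑ i, x i * (inner ℝ (p i) q : ℝ) := by
      nth_rewrite 1 [hq]
      rw [sum_inner]
      exact Finset.sum_congr rfl fun i _ => real_inner_smul_left _ _ _
    have hdp : dotProduct x (D.mulVec x) = - 2 * ‖q‖ ^ 2 := by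
      simp only [dotProduct, hmv, mul_sub]
      rw [Finset.sum_sub_distrib, ← Finset.sum_mul, hx, zero_mul, zero_sub,
        ← real_inner_self_eq_norm_sq, hqq, Finset.mul_sum, ← Finset.sum_neg_distrib]
      exact Finset.sum_congr rfl fun i _ => by ring
    rw [hdp]
    nlinarith [sq_nonneg ‖q‖]
  · intro hpsd
    rcases Nat.eq_zero_or_pos n with hn | hn
    · subst hn
      exact ⟨0, fun i => 0, fun i => i.elim0⟩
    · set i0 : Fin n := ⟨0, hn⟩
      set G : Matrix (Fin n) (Fin n) ℝ :=
        Matrix.of (fun i j => (D i i0 + D i0 j - D i j) / 2) with hG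
      have hGsymm : ∀ i j, G i j = G j i := by
        intro i j
        simp only [hG, Matrix.of_apply]
        rw [hsymm.apply j i, hsymm.apply j i0, hsymm.apply i0 i]
        ring
      have hGpsd : G.PosSemidef := by
        refine Matrix.PosSemidef.of_dotProduct_mulVec_nonneg ?_ ?_
        · ext i j
          simp only [Matrix.conjTranspose_apply, Matrix.transpose_apply, star_trivial]
          exact hGsymm j i
        · intro x
          set s : ℝ := ∑ i, x i with hs
          set y : Fin n → ℝ := x - s • (Pi.single i0 1 : Fin n → ℝ) with hy
          have hysum : ∑ i, y i = 0 := by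
            have h1 : ∑ i, (Pi.single i0 (1:ℝ) : Fin n → ℝ) i = 1 := by
              simp [Finset.sum_pi_single]
            simp only [hy, Pi.sub_apply, Pi.smul_apply, smul_eq_mul]
            rw [Finset.sum_sub_distrib, ← Finset.mul_sum, h1, mul_one, ← hs, sub_self]
          have hDy := hpsd y hysum
          set T : ℝ := ∑ j, D i0 j * x j with hT
          have hT' : ∑ i, x i * D i i0 = T := by
            rw [hT]
            refine Finset.sum_congr rfl fun i _ => ?_
            rw [hsymm.apply i0 i]; ring
          have hA : dotProduct y (D.mulVec y) =
              dotProduct x (D.mulVec x) - 2 * s * T := by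
            rw [hy]
            rw [sub_dotProduct, Matrix.mulVec_sub, dotProduct_sub,
              dotProduct_sub]
            have e1 : D.mulVec (s • (Pi.single i0 1 : Fin n → ℝ)) = s • (fun i => D i i0) := by
              ext i
              simp [Matrix.mulVec, dotProduct_smul, dotProduct_single]
            have e2 : dotProduct x (s • (fun i => D i i0)) = s * T := by
              simp only [dotProduct, Pi.smul_apply, smul_eq_mul]
              rw [← hT', Finset.mul_sum]
              exact Finset.sum_congr rfl fun i _ => by ring
            have e3 : dotProduct (s • (Pi.single i0 1 : Fin n → ℝ)) (D.mulVec x)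
                = s * T := by
              rw [smul_dotProduct, single_dotProduct, smul_eq_mul, one_mul]
              simp only [Matrix.mulVec, dotProduct, hT]
            have e4 : dotProduct (s • (Pi.single i0 1 : Fin n → ℝ))
                (s • (fun i => D i i0)) = 0 := by
              rw [smul_dotProduct, single_dotProduct, smul_eq_mul]
              simp [hdiag i0]
            rw [e1, e2, e3, e4]
            ring
          have hB : dotProduct x (G.mulVec x) =
              s * T - dotProduct x (D.mulVec x) / 2 := by
            have hmv : ∀ i, (G.mulVec x) i = (D i i0 * s + T - (D.mulVec x) i) / 2 := by
              intro i
              simp only [Matrix.mulVec, dotProduct, hG, Matrix.of_apply]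
              have : ∀ j, (D i i0 + D i0 j - D i j) / 2 * x j
                  = (D i i0 * x j + D i0 j * x j - D i j * x j) / 2 := fun j => by ring
              simp only [this]
              rw [← Finset.sum_div, hT]
              congr 1
              rw [hs, Finset.mul_sum, Finset.sum_sub_distrib, Finset.sum_add_distrib]
            simp only [dotProduct, hmv]
            have : ∀ i, x i * ((D i i0 * s + T - (D.mulVec x) i) / 2) =
                (x i * D i i0 * s + x i * T - x i * (D.mulVec x) i) / 2 := fun i => by ring
            simp only [this]
            rw [← Finset.sum_div, Finset.sum_sub_distrib, Finset.sum_add_distrib]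
            have e5 : ∑ i, x i * D i i0 * s = T * s := by
              rw [← hT', Finset.sum_mul]
            have e6 : ∑ i, x i * T = s * T := by
              rw [hs, Finset.sum_mul]
            rw [e5, e6]
            simp only [dotProduct, Matrix.mulVec]
            ring
          show 0 ≤ dotProduct x (G.mulVec x)
          rw [hB]
          linarith [hA ▸ hDy]
      obtain ⟨B, hBe⟩ : ∃ B : Matrix (Fin n) (Fin n) ℝ, G = Bᴴ * B := by
        open scoped MatrixOrder in exact CStarAlgebra.nonneg_iff_eq_star_mul_self.mp hGpsd.nonneg
      set p' : Fin n → EuclideanSpace ℝ (Fin n) := fun i => WithLp.toLp 2 (fun k => B k i) with hp'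
      refine ⟨n, p', fun i j => ?_⟩
      have hGip : ∀ i j, G i j = ∑ k, B k i * B k j := by
        intro i j
        rw [hBe]
        simp [Matrix.mul_apply, Matrix.conjTranspose_apply]
      have hdist : dist (p' i) (p' j) ^ 2 = ∑ k, (B k i - B k j) ^ 2 := by
        rw [EuclideanSpace.dist_eq, Real.sq_sqrt (by positivity)]
        exact Finset.sum_congr rfl fun k _ => by rw [Real.dist_eq, sq_abs]
      rw [hdist]
      have expand : ∑ k, (B k i - B k j) ^ 2
          = G i i + G j j - 2 * G i j := by
        simp only [hGip]
        rw [Finset.mul_sum, ← Finset.sum_add_distrib, ← Finset.sum_sub_distrib]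
        exact Finset.sum_congr rfl fun k _ => by ring
      rw [expand]
      simp only [hG, Matrix.of_apply]
      rw [hdiag i, hdiag j, hsymm.apply i0 j, hsymm.apply i0 i]
      ring
end

section
/- Let D be a nonzero EDM with Dw = e. Then D is nonspherical (its generating points do not lie on a common sphere) if and only if eᵀw = 0. -/
/-!
Write `f x = ∑ⱼ wⱼ ‖x - pⱼ‖²`, so that `D w = e` says `f (pᵢ) = 1` for all `i`, and let
`s = ∑ⱼ wⱼ`, `u = ∑ⱼ wⱼ pⱼ`. Then `f x = s ‖x‖² - 2 ⟪x, u⟫ + const`.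

If `s ≠ 0`, completing the square gives `f x = s ‖x - u / s‖² + f (u / s)`, so all `pᵢ` are at
the same distance from `u / s`.

If `s = 0`, `f` is affine, and `0 = ∑ᵢ wᵢ f (pᵢ) = -2 ‖u‖²` forces `u = 0`: `f` is constant.
A centre `c` of a sphere through the `pᵢ` would have `f c = s ρ² = 0 ≠ 1 = f (pᵢ)`.
-/

open Finset
open scoped RealInnerProductSpace

section WeightedSquaredDistance

variable {ι E : Type*} [Fintype ι] [NormedAddCommGroup E] [InnerProductSpace ℝ E]
  {p : ι → E} {w : ι → ℝ}

theorem sum_mul_dist_sq_eq (x : E) :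
    ∑ j, w j * dist x (p j) ^ 2 =
      (∑ j, w j) * ‖x‖ ^ 2 - 2 * ⟪x, ∑ j, w j • p j⟫ + ∑ j, w j * ‖p j‖ ^ 2 := by
  rw [inner_sum, sum_mul, mul_sum, ← sum_sub_distrib, ← sum_add_distrib]
  refine sum_congr rfl fun j _ => ?_
  rw [dist_eq_norm, norm_sub_sq_real, real_inner_smul_right]
  ring

theorem sum_mul_dist_sq_eq_mul_dist_sq_add (hw : ∑ j, w j ≠ 0) (x : E) :
    ∑ j, w j * dist x (p j) ^ 2 =
      (∑ j, w j) * dist x ((∑ j, w j)⁻¹ • ∑ j, w j • p j) ^ 2 +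
        ∑ j, w j * dist ((∑ j, w j)⁻¹ • ∑ j, w j • p j) (p j) ^ 2 := by
  set s := ∑ j, w j
  set u := ∑ j, w j • p j
  rw [sum_mul_dist_sq_eq, sum_mul_dist_sq_eq, dist_eq_norm, norm_sub_sq_real,
    real_inner_smul_right, real_inner_smul_left, norm_smul, Real.norm_eq_abs, mul_pow, sq_abs,
    real_inner_self_eq_norm_sq]
  field_simp
  ring

theorem exists_dist_eq_of_sum_ne_zero (hp : ∀ i, ∑ j, w j * dist (p i) (p j) ^ 2 = 1)
    (hw : ∑ j, w j ≠ 0) : ∃ (c : E) (ρ : ℝ), ∀ i, dist (p i) c = ρ := by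
  set c := (∑ j, w j)⁻¹ • ∑ j, w j • p j
  refine ⟨c, √((1 - ∑ j, w j * dist c (p j) ^ 2) / ∑ j, w j), fun i => ?_⟩
  have hi := hp i
  rw [sum_mul_dist_sq_eq_mul_dist_sq_add hw] at hi
  rw [← Real.sqrt_sq dist_nonneg]
  congr 1
  rw [eq_div_iff hw]
  linarith

theorem sum_ne_zero_of_dist_eq [Nonempty ι] (hp : ∀ i, ∑ j, w j * dist (p i) (p j) ^ 2 = 1)
    {c : E} {ρ : ℝ} (hc : ∀ i, dist (p i) c = ρ) : ∑ j, w j ≠ 0 := by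
  intro hw
  set u := ∑ j, w j • p j
  set T := ∑ j, w j * ‖p j‖ ^ 2
  have h_affine : ∀ x, ∑ j, w j * dist x (p j) ^ 2 = T - 2 * ⟪x, u⟫ := fun x => by
    rw [sum_mul_dist_sq_eq, hw]; ring
  have hu : u = 0 := by
    have h : ∑ i, w i * (T - 2 * ⟪p i, u⟫) = (∑ i, w i) * T - 2 * ⟪u, u⟫ := by
      simp only [mul_sub, sum_sub_distrib, ← sum_mul, u, sum_inner, real_inner_smul_left, mul_sum]
      ring_nf
    simp only [← h_affine, hp, mul_one, hw, zero_mul, zero_sub, zero_eq_neg] at h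
    simpa using h
  have hc0 : ∑ j, w j * dist c (p j) ^ 2 = 0 := by
    simp only [dist_comm c, hc, ← sum_mul, hw, zero_mul]
  obtain ⟨i⟩ := ‹Nonempty ι›
  have hi := hp i
  rw [h_affine, hu] at hi hc0
  simp only [inner_zero_right, mul_zero, sub_zero] at hi hc0
  linarith

theorem exists_dist_eq_iff_sum_ne_zero [Nonempty ι]
    (hp : ∀ i, ∑ j, w j * dist (p i) (p j) ^ 2 = 1) :
    (∃ (c : E) (ρ : ℝ), ∀ i, dist (p i) c = ρ) ↔ ∑ j, w j ≠ 0 :=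
  ⟨fun ⟨_, _, hc⟩ => sum_ne_zero_of_dist_eq hp hc, exists_dist_eq_of_sum_ne_zero hp⟩

end WeightedSquaredDistance

theorem nonspherical_EDM_iff
    (n k : ℕ) (p : Fin n → EuclideanSpace ℝ (Fin k))
    (D : Matrix (Fin n) (Fin n) ℝ)
    (hD : ∀ i j, D i j = dist (p i) (p j) ^ 2)
    (hD0 : D ≠ 0)
    (w : Fin n → ℝ)
    (hw : D.mulVec w = fun _ => (1 : ℝ)) :
    (¬ ∃ (c : EuclideanSpace ℝ (Fin k)) (ρ : ℝ), ∀ i, dist (p i) c = ρ) ↔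
      (∑ i, w i) = 0 := by
  have : Nonempty (Fin n) := by
    refine Fin.pos_iff_nonempty.mp (Nat.pos_of_ne_zero ?_)
    rintro rfl
    exact hD0 (Subsingleton.elim _ _)
  have hp : ∀ i, ∑ j, w j * dist (p i) (p j) ^ 2 = 1 := fun i => by
    simpa [Matrix.mulVec, dotProduct, hD, mul_comm] using congrFun hw i
  rw [exists_dist_eq_iff_sum_ne_zero hp, not_not]
end

section
/- Let D be an n×n EDM, n ≥ 3, all of whose off-diagonal entries are positive. Then any 3 columns of D are linearly independent. -/
theorem EDM_any_three_columns_linearly_independent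
    (n k : ℕ) (hn : 3 ≤ n)
    (p : Fin n → EuclideanSpace ℝ (Fin k))
    (hp : Function.Injective p)
    (D : Matrix (Fin n) (Fin n) ℝ)
    (hD : ∀ i j, D i j = dist (p i) (p j) ^ 2) :
    ∀ i j l : Fin n, i ≠ j → i ≠ l → j ≠ l →
      LinearIndependent ℝ
        ![(fun x => D x i), (fun x => D x j), (fun x => D x l)] := by
  intro i j l hij hil hjl
  have hdiag : ∀ a, D a a = 0 := by
    intro a; rw [hD]; simp
  have hsym : ∀ a b, D a b = D b a := by
    intro a b; rw [hD, hD, dist_comm]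
  have hpos : ∀ a b, a ≠ b → 0 < D a b := by
    intro a b hab
    rw [hD]
    exact pow_pos (dist_pos.mpr fun h => hab (hp h)) 2
  rw [Fintype.linearIndependent_iff]
  intro g hg
  have h1 := congrFun hg i
  have h2 := congrFun hg j
  have h3 := congrFun hg l
  simp only [Fin.sum_univ_three, Matrix.cons_val_zero, Matrix.cons_val_one,
    Matrix.head_cons, Matrix.cons_val_two, Matrix.tail_cons, Pi.add_apply,
    Pi.smul_apply, smul_eq_mul, Pi.zero_apply] at h1 h2 h3
  rw [hdiag i] at h1
  rw [hdiag j] at h2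
  rw [hdiag l] at h3
  have hβ := hpos i j hij
  have hγ := hpos i l hil
  have hδ := hpos j l hjl
  rw [hsym j i] at h2
  rw [hsym l i, hsym l j] at h3
  have hc : g 2 = 0 := by nlinarith [sq_nonneg (g 2), mul_pos hβ hγ, mul_pos hβ hδ, mul_pos hγ hδ]
  have ha : g 0 = 0 := by
    rw [hc] at h2; rcases mul_eq_zero.mp (by linarith : g 0 * D i j = 0) with h | h
    · exact h
    · exact absurd h (ne_of_gt hβ)
  have hb : g 1 = 0 := by
    rw [hc] at h1; rcases mul_eq_zero.mp (by linarith : g 1 * D i j = 0) with h | h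
    · exact h
    · exact absurd h (ne_of_gt hβ)
  intro m; fin_cases m <;> assumption
end

section
/- Any 3×3 EDM whose three generating points are distinct and collinear is nonsingular. -/
theorem collinear_EDM_nonsingular
    (k : ℕ) (p : Fin 3 → EuclideanSpace ℝ (Fin k))
    (hp : Function.Injective p)
    (hcol : Collinear ℝ (Set.range p))
    (D : Matrix (Fin 3) (Fin 3) ℝ)
    (hD : ∀ i j, D i j = dist (p i) (p j) ^ 2) :
    D.det ≠ 0 := by
  obtain ⟨v, hv⟩ := (collinear_iff_of_mem (Set.mem_range_self (0 : Fin 3))).mp hcol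
  choose t ht using fun i => hv (p i) (Set.mem_range_self i)
  have hD' : ∀ i j, D i j = (t i - t j) ^ 2 * ‖v‖ ^ 2 := by
    intro i j
    rw [hD i j, dist_eq_norm, ht i, ht j]
    simp only [vadd_eq_add]
    have : t i • v + p 0 - (t j • v + p 0) = (t i - t j) • v := by
      rw [sub_smul]; abel
    rw [this, norm_smul, mul_pow, Real.norm_eq_abs, sq_abs]
  have hv0 : v ≠ 0 := by
    intro h
    have : p 0 = p 1 := by rw [ht 0, ht 1, h, smul_zero, smul_zero]
    exact absurd (hp this) (by decide)
  have htne : ∀ i j : Fin 3, i ≠ j → t i - t j ≠ 0 := by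
    intro i j hij h
    apply hij; apply hp
    rw [ht i, ht j, sub_eq_zero.mp h]
  have hd : D.det = 2 * ((t 0 - t 1) * (t 0 - t 2) * (t 1 - t 2) * ‖v‖ ^ 3) ^ 2 := by
    rw [Matrix.det_fin_three]
    simp only [hD']
    ring
  rw [hd]
  have : (t 0 - t 1) * (t 0 - t 2) * (t 1 - t 2) * ‖v‖ ^ 3 ≠ 0 := by
    have hn : ‖v‖ ≠ 0 := norm_ne_zero_iff.mpr hv0
    exact mul_ne_zero (mul_ne_zero (mul_ne_zero (htne 0 1 (by decide))
      (htne 0 2 (by decide))) (htne 1 2 (by decide))) (pow_ne_zero _ hn)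
  positivity
end

section
/- Any 3×3 EDM whose three generating points are not collinear is nonsingular. -/
theorem noncollinear_EDM_nonsingular
    (k : ℕ) (p : Fin 3 → EuclideanSpace ℝ (Fin k))
    (hcol : ¬ Collinear ℝ (Set.range p))
    (D : Matrix (Fin 3) (Fin 3) ℝ)
    (hD : ∀ i j, D i j = dist (p i) (p j) ^ 2) :
    D.det ≠ 0 := by
  have hrange : Set.range p = {p 0, p 1, p 2} := by
    ext x
    constructor
    · rintro ⟨i, rfl⟩
      fin_cases i <;> simp
    · rintro (rfl | rfl | rfl) <;> exact ⟨_, rfl⟩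
  have hne : ∀ i j : Fin 3, i ≠ j → p i ≠ p j := by
    intro i j hij heq
    apply hcol
    rw [hrange]
    fin_cases i <;> fin_cases j <;> simp_all <;> exact hcol (collinear_pair ℝ _ _)
  have h01 : dist (p 0) (p 1) > 0 := dist_pos.mpr (hne 0 1 (by decide))
  have h02 : dist (p 0) (p 2) > 0 := dist_pos.mpr (hne 0 2 (by decide))
  have h12 : dist (p 1) (p 2) > 0 := dist_pos.mpr (hne 1 2 (by decide))
  rw [Matrix.det_fin_three]
  simp only [hD, dist_self]
  rw [dist_comm (p 1) (p 0), dist_comm (p 2) (p 0), dist_comm (p 2) (p 1)]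
  nlinarith [mul_pos (mul_pos h01 h02) h12,
    sq_nonneg (dist (p 0) (p 1) * dist (p 0) (p 2) * dist (p 1) (p 2))]
end

section
/- Every penny graph is 3-degenerate: every nonempty finite set of points in the plane with pairwise distances ≥ 1 contains a point having at most 3 other points of the set at distance exactly 1 from it. -/
private theorem penny_chain4 (a b c d s : ℝ) (hs : s^2 = 3) (hs0 : 0 < s)
    (hd : 0 ≤ d) (hdc : d < c) (hcb : c < b) (hba : b < a)
    (h1 : 1 + a*b ≤ s*(a-b)) (h2 : 1 + b*c ≤ s*(b-c)) (h3 : 1 + c*d ≤ s*(c-d)) :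
    False := by
  have hc : 0 ≤ c := le_of_lt (lt_of_le_of_lt hd hdc)
  have hb : 0 ≤ b := le_of_lt (lt_of_le_of_lt hc hcb)
  have ha : 0 ≤ a := le_of_lt (lt_of_le_of_lt hb hba)
  have hab : (0:ℝ) < 1 + a*b := by nlinarith
  have hbc : (0:ℝ) < 1 + b*c := by nlinarith
  have hcd : (0:ℝ) < 1 + c*d := by nlinarith
  have hp12 : (1+a*b)*(1+b*c) ≤ 3*((a-b)*(b-c)) := by
    have h := mul_le_mul h1 h2 (le_of_lt hbc) (mul_nonneg hs0.le (by linarith))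
    have e : s*(a-b)*(s*(b-c)) = 3*((a-b)*(b-c)) := by linear_combination ((a-b)*(b-c))*hs
    linarith
  have e1 : (1+a*b)*(1+b*c) ≤ s*(a-b)*(1+b*c) := mul_le_mul_of_nonneg_right h1 hbc.le
  have e2 : (1+b*c)*(1+a*b) ≤ s*(b-c)*(1+a*b) := mul_le_mul_of_nonneg_right h2 hab.le
  have hsN : 2*((1+a*b)*(1+b*c)) ≤ s*((a-c)*(1+b^2)) := by nlinarith [e1, e2]
  have hsD : 3*((1+a*c)*(1+b^2)) ≤ 2*((1+a*b)*(1+b*c)) := by nlinarith [hp12]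
  have e3 : s*(s*((1+a*c)*(1+b^2))) = 3*((1+a*c)*(1+b^2)) := by
    linear_combination ((1+a*c)*(1+b^2))*hs
  have h6 : s*(s*((1+a*c)*(1+b^2))) ≤ s*((a-c)*(1+b^2)) := by linarith
  have h7 : s*((1+a*c)*(1+b^2)) ≤ (a-c)*(1+b^2) := le_of_mul_le_mul_left h6 hs0
  have hb2 : (0:ℝ) < 1+b^2 := by positivity
  have h7' : (s*(1+a*c))*(1+b^2) ≤ (a-c)*(1+b^2) := by nlinarith [h7]
  have key : s*(1+a*c) ≤ a-c := le_of_mul_le_mul_right h7' hb2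
  have h8 : (s*(1+a*c))*(1+c*d) ≤ (a-c)*(s*(c-d)) :=
    mul_le_mul key h3 hcd.le (by linarith)
  have h9 : s*((1+a*c)*(1+c*d)) ≤ s*((a-c)*(c-d)) := by nlinarith [h8]
  have h10 : (1+a*c)*(1+c*d) ≤ (a-c)*(c-d) := le_of_mul_le_mul_left h9 hs0
  nlinarith [h10, mul_nonneg (mul_nonneg ha (sq_nonneg c)) hd, mul_nonneg ha hd, sq_nonneg c]

private theorem penny_pairC (a b : ℝ) (hb : 0 ≤ b) (hba : b < a)
    (hC : a^2*b^2 + 8*(a*b) - 3*a^2 - 3*b^2 + 1 ≤ 0) :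
    1 + a*b ≤ Real.sqrt 3 * (a - b) := by
  have h2 : (1+a*b)^2 ≤ 3*(a-b)^2 := by nlinarith
  have hab : (0:ℝ) ≤ 1 + a*b := by nlinarith
  have h3 := Real.sqrt_le_sqrt h2
  rw [Real.sqrt_mul (by norm_num), Real.sqrt_sq hab,
    Real.sqrt_sq (by linarith : (0:ℝ) ≤ a - b)] at h3
  exact h3

private theorem penny_dist_sq (p q : EuclideanSpace ℝ (Fin 2)) :
    dist p q ^ 2 = (p 0 - q 0)^2 + (p 1 - q 1)^2 := by
  rw [EuclideanSpace.dist_eq, Real.sq_sqrt (by positivity)]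
  simp [Fin.sum_univ_two, Real.dist_eq, sq_abs]

open scoped Classical in
theorem penny_graph_three_degenerate
    (P : Finset (EuclideanSpace ℝ (Fin 2)))
    (hP : P.Nonempty)
    (hsep : ∀ p ∈ P, ∀ q ∈ P, p ≠ q → 1 ≤ dist p q) :
    ∃ p ∈ P, (P.filter (fun q => q ≠ p ∧ dist p q = 1)).card ≤ 3 := by
  classical
  obtain ⟨p₀, hp₀, hm0⟩ := P.exists_max_image (fun q => q 0) hP
  set P' := P.filter (fun q => q 0 = p₀ 0) with hP'
  have hp₀' : p₀ ∈ P' := by simp [hP', hp₀]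
  obtain ⟨p, hpP', hm1⟩ := P'.exists_max_image (fun q => q 1) ⟨p₀, hp₀'⟩
  have hpP : p ∈ P := (Finset.mem_filter.mp hpP').1
  have hp0 : p 0 = p₀ 0 := (Finset.mem_filter.mp hpP').2
  refine ⟨p, hpP, ?_⟩
  by_contra hcard
  push_neg at hcard
  set N := P.filter (fun q => q ≠ p ∧ dist p q = 1) with hN
  have h4 : 4 ≤ N.card := hcard
  set f : EuclideanSpace ℝ (Fin 2) → ℝ := fun q => -(q 0 - p 0) / (1 - (q 1 - p 1)) with hf
  -- basic facts about each neighbor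
  have hfact : ∀ q ∈ N, 0 ≤ f q ∧ (q 0 - p 0)^2 + (q 1 - p 1)^2 = 1 ∧
      (q 0 - p 0) * (1 + (f q)^2) = -(2 * f q) ∧
      (q 1 - p 1) * (1 + (f q)^2) = (f q)^2 - 1 := by
    intro q hq
    rw [hN, Finset.mem_filter] at hq
    obtain ⟨hqP, hqp, hdq⟩ := hq
    have hunit : (q 0 - p 0)^2 + (q 1 - p 1)^2 = 1 := by
      have h := penny_dist_sq q p
      rw [dist_comm q p, hdq] at h
      nlinarith [h]
    have hx : q 0 - p 0 ≤ 0 := by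
      have := hm0 q hqP
      simp only at this
      linarith [hp0.ge, hp0.le]
    have hy1 : q 1 - p 1 < 1 := by
      by_contra h
      push_neg at h
      have hyeq : q 1 - p 1 = 1 := by nlinarith
      have hx0 : q 0 = p 0 := by nlinarith
      have hqP'' : q ∈ P' := by
        rw [hP', Finset.mem_filter]
        exact ⟨hqP, by rw [hx0, hp0]⟩
      have := hm1 q hqP''
      simp only at this
      linarith
    have hden : 0 < 1 - (q 1 - p 1) := by linarith
    have ht : f q * (1 - (q 1 - p 1)) = -(q 0 - p 0) := by
      rw [hf]; field_simp
    have ht0 : 0 ≤ f q := by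
      rw [hf]; exact div_nonneg (by linarith) hden.le
    have h1 : (f q * (1 - (q 1 - p 1)))^2 = (q 0 - p 0)^2 := by rw [ht]; ring
    have h2 : (1 - (q 1 - p 1)) * ((f q)^2 * (1 - (q 1 - p 1)) - (1 + (q 1 - p 1))) = 0 := by
      linear_combination h1 + hunit
    have hsq : (f q)^2 * (1 - (q 1 - p 1)) = 1 + (q 1 - p 1) := by
      rcases mul_eq_zero.mp h2 with h | h
      · linarith
      · linarith
    refine ⟨ht0, hunit, ?_, ?_⟩
    · linear_combination (1 + (f q)^2)*ht - (f q)*hsq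
    · linear_combination (-1 : ℝ)*hsq
  -- injectivity of f on N
  have hinj : Set.InjOn f N := by
    intro q hq r hr hfe
    obtain ⟨_, _, hx1, hy1⟩ := hfact q hq
    obtain ⟨_, _, hx2, hy2⟩ := hfact r hr
    rw [hfe] at hx1 hy1
    have hpos : (0:ℝ) < 1 + (f r)^2 := by positivity
    have e0 : q 0 = r 0 := by
      have := hx1.trans hx2.symm
      have h := mul_right_cancel₀ (ne_of_gt hpos) this
      linarith
    have e1 : q 1 = r 1 := by
      have := hy1.trans hy2.symm
      have h := mul_right_cancel₀ (ne_of_gt hpos) this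
      linarith
    ext i
    fin_cases i <;> assumption
  -- pairwise polynomial condition on the image
  set A := N.image f with hA
  have hpos : ∀ u ∈ A, 0 ≤ u := by
    intro u hu
    obtain ⟨q, hq, rfl⟩ := Finset.mem_image.mp hu
    exact (hfact q hq).1
  have hCpair : ∀ u ∈ A, ∀ v ∈ A, u ≠ v →
      u^2*v^2 + 8*(u*v) - 3*u^2 - 3*v^2 + 1 ≤ 0 := by
    intro u hu v hv huv
    obtain ⟨q, hq, rfl⟩ := Finset.mem_image.mp hu
    obtain ⟨r, hr, rfl⟩ := Finset.mem_image.mp hv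
    have hqr : q ≠ r := fun h => huv (by rw [h])
    obtain ⟨_, hu1, ex1, ey1⟩ := hfact q hq
    obtain ⟨_, hu2, ex2, ey2⟩ := hfact r hr
    have hqP : q ∈ P := (Finset.mem_filter.mp hq).1
    have hrP : r ∈ P := (Finset.mem_filter.mp hr).1
    have hd1 : (1:ℝ) ≤ dist q r := hsep q hqP r hrP hqr
    have hd2 : (1:ℝ) ≤ (q 0 - r 0)^2 + (q 1 - r 1)^2 := by
      have := penny_dist_sq q r
      nlinarith [this, dist_nonneg (x := q) (y := r)]
    have inner : (q 0 - p 0)*(r 0 - p 0) + (q 1 - p 1)*(r 1 - p 1) ≤ 1/2 := by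
      nlinarith [hd2, hu1, hu2]
    have hD : (0:ℝ) < (1+(f q)^2)*(1+(f r)^2) := by positivity
    have hm := mul_le_mul_of_nonneg_left inner hD.le
    have ee1 : (q 0 - p 0)*(r 0 - p 0)*((1+(f q)^2)*(1+(f r)^2)) = 4*((f q)*(f r)) := by
      linear_combination ((r 0 - p 0)*(1+(f r)^2))*ex1 + (-(2*(f q)))*ex2
    have ee2 : (q 1 - p 1)*(r 1 - p 1)*((1+(f q)^2)*(1+(f r)^2)) = ((f q)^2-1)*((f r)^2-1) := by
      linear_combination ((r 1 - p 1)*(1+(f r)^2))*ey1 + ((f q)^2-1)*ey2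
    linarith [hm, ee1, ee2]
  have hAcard : 4 ≤ A.card := by
    rw [hA, Finset.card_image_of_injOn hinj]
    exact h4
  -- extract four elements in decreasing order
  have hA0 : A.Nonempty := Finset.card_pos.mp (by omega)
  set a := A.max' hA0 with hadef
  have haA : a ∈ A := A.max'_mem hA0
  set A1 := A.erase a with hA1
  have hA1card : 3 ≤ A1.card := by
    rw [hA1, Finset.card_erase_of_mem haA]; omega
  have hA1ne : A1.Nonempty := Finset.card_pos.mp (by omega)
  set b := A1.max' hA1ne with hbdef
  have hbA1 : b ∈ A1 := A1.max'_mem hA1ne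
  have hbA : b ∈ A := Finset.mem_of_mem_erase hbA1
  have hba : b < a := lt_of_le_of_ne (A.le_max' b hbA) (Finset.ne_of_mem_erase hbA1)
  set A2 := A1.erase b with hA2
  have hA2card : 2 ≤ A2.card := by
    rw [hA2, Finset.card_erase_of_mem hbA1]; omega
  have hA2ne : A2.Nonempty := Finset.card_pos.mp (by omega)
  set c := A2.max' hA2ne with hcdef
  have hcA2 : c ∈ A2 := A2.max'_mem hA2ne
  have hcA1 : c ∈ A1 := Finset.mem_of_mem_erase hcA2
  have hcA : c ∈ A := Finset.mem_of_mem_erase hcA1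
  have hcb : c < b := lt_of_le_of_ne (A1.le_max' c hcA1) (Finset.ne_of_mem_erase hcA2)
  set A3 := A2.erase c with hA3
  have hA3card : 1 ≤ A3.card := by
    rw [hA3, Finset.card_erase_of_mem hcA2]; omega
  have hA3ne : A3.Nonempty := Finset.card_pos.mp (by omega)
  obtain ⟨d, hdA3⟩ := hA3ne
  have hdA2 : d ∈ A2 := Finset.mem_of_mem_erase hdA3
  have hdA : d ∈ A := Finset.mem_of_mem_erase (Finset.mem_of_mem_erase hdA2)
  have hdc : d < c := lt_of_le_of_ne (A2.le_max' d hdA2) (Finset.ne_of_mem_erase hdA3)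
  -- conclude
  have hs : (Real.sqrt 3)^2 = 3 := Real.sq_sqrt (by norm_num)
  have hs0 : 0 < Real.sqrt 3 := Real.sqrt_pos.mpr (by norm_num)
  exact penny_chain4 a b c d (Real.sqrt 3) hs hs0 (hpos d hdA) hdc hcb hba
    (penny_pairC a b (hpos b hbA) hba (hCpair a haA b hbA (ne_of_gt hba)))
    (penny_pairC b c (hpos c hcA) hcb (hCpair b hbA c hcA (ne_of_gt hcb)))
    (penny_pairC c d (hpos d hdA) hdc (hCpair c hcA d hdA (ne_of_gt hdc)))
end

section
/- If G is a penny graph on n ≥ 5 nodes and the complement of G is disconnected, then the complement has exactly two components, one of which is a single vertex, and n ∈ {5,6,7}; i.e., G is realized by one disk touching all the other n−1 disks (of which there are 4, 5, or 6). -/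
/-!
If `Gᶜ` is disconnected, every vertex of one component of `Gᶜ` is adjacent in `G` to every vertex
outside it. Two unit circles with distinct centres meet in at most two points, so two vertices of
a penny graph have at most two common neighbours; with `n ≥ 5` this forces one side of the split
to be a single vertex adjacent to all others. Those `n - 1` neighbours are centres of pennies
around it, pairwise at distance at least `1` on a unit circle; two of them on a common arc of angle
`π / 3` would be closer than `1`, so six such arcs leave room for at most `6`.
-/

open Module

open Real Complex in
theorem Complex.norm_sub_lt_one_of_abs_arg_sub_lt {z w : ℂ} (hz : ‖z‖ = 1) (hw : ‖w‖ = 1)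
    (h : |arg z - arg w| < π / 3) : ‖z - w‖ < 1 := by
  have hz' : z = exp (arg z * I) := by simpa [hz] using (norm_mul_exp_arg_mul_I z).symm
  have hw' : w = exp (arg w * I) := by simpa [hw] using (norm_mul_exp_arg_mul_I w).symm
  have hsub : z - w = exp (arg w * I) * (exp (I * ↑(arg z - arg w)) - 1) := by
    rw [mul_sub, ← Complex.exp_add, mul_one, ← hw']
    nth_rewrite 1 [hz']
    push_cast
    ring_nf
  rw [hsub, norm_mul, norm_exp_ofReal_mul_I, one_mul, norm_exp_I_mul_ofReal_sub_one,
    norm_mul, Real.norm_two, Real.norm_eq_abs, ← lt_div_iff₀' two_pos, abs_lt]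
  obtain ⟨hlo, hhi⟩ := abs_lt.mp h
  have hπ := Real.pi_pos
  constructor
  · calc -(1 / 2) = Real.sin (-(π / 6)) := by rw [Real.sin_neg, Real.sin_pi_div_six]
      _ < Real.sin ((arg z - arg w) / 2) :=
        Real.sin_lt_sin_of_lt_of_le_pi_div_two (by linarith) (by linarith) (by linarith)
  · calc Real.sin ((arg z - arg w) / 2) < Real.sin (π / 6) :=
        Real.sin_lt_sin_of_lt_of_le_pi_div_two (by linarith) (by linarith) (by linarith)
      _ = 1 / 2 := Real.sin_pi_div_six

theorem Int.abs_sub_lt_one_of_ceil_eq_ceil {R : Type*} [Ring R] [LinearOrder R] [IsOrderedRing R]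
    [FloorRing R] {a b : R} (h : ⌈a⌉ = ⌈b⌉) : |a - b| < 1 := by
  have := Int.abs_sub_lt_one_of_floor_eq_floor (a := -a) (b := -b) (by simp [Int.floor_neg, h])
  rwa [neg_sub_neg, abs_sub_comm] at this

open Real Complex in
theorem Complex.card_le_six_of_norm_eq_one (s : Finset ℂ) (hs : ∀ z ∈ s, ‖z‖ = 1)
    (hsep : (s : Set ℂ).Pairwise fun z w => 1 ≤ ‖z - w‖) : s.card ≤ 6 := by
  have hπ := Real.pi_pos
  -- the six arcs `((k - 1) π / 3, k π / 3]`, `k = -2, …, 3`, cover the range of `arg`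
  have hmaps : ∀ z ∈ s, ⌈arg z * 3 / π⌉ ∈ Finset.Icc (-2 : ℤ) 3 := by
    intro z _
    have h₁ : -3 < arg z * 3 / π := by
      rw [lt_div_iff₀ hπ]; linarith [neg_pi_lt_arg z]
    have h₂ : arg z * 3 / π ≤ 3 := by
      rw [div_le_iff₀ hπ]; linarith [arg_le_pi z]
    rw [Finset.mem_Icc, Int.le_ceil_iff, Int.ceil_le]
    exact ⟨by norm_num; linarith, by exact_mod_cast h₂⟩
  by_contra! h
  obtain ⟨z, hz, w, hw, hzw, heq⟩ :=
    Finset.exists_ne_map_eq_of_card_lt_of_maps_to (by simpa using h) hmaps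
  have harg : |arg z - arg w| < π / 3 := by
    have := Int.abs_sub_lt_one_of_ceil_eq_ceil heq
    rw [← sub_div, ← sub_mul, abs_div, abs_mul, abs_of_pos hπ, div_lt_one hπ] at this
    norm_num at this
    linarith
  exact (hsep hz hw hzw).not_gt (norm_sub_lt_one_of_abs_arg_sub_lt (hs z hz) (hs w hw) harg)

namespace EuclideanGeometry

variable {V P : Type*} [NormedAddCommGroup V] [InnerProductSpace ℝ V] [MetricSpace P]
  [NormedAddTorsor V P]

theorem card_le_six_of_dist_eq_one (hd : finrank ℝ V = 2) (s : Finset P) (c : P)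
    (hs : ∀ x ∈ s, dist x c = 1) (hsep : (s : Set P).Pairwise fun x y => 1 ≤ dist x y) :
    s.card ≤ 6 := by
  have : FiniteDimensional ℝ V := Module.finite_of_finrank_eq_succ hd
  let e : P ≃ᵃⁱ[ℝ] ℂ := (AffineIsometryEquiv.vaddConst ℝ c).symm.trans
    (Complex.isometryOfOrthonormal
      ((stdOrthonormalBasis ℝ V).reindex (finCongr hd))).symm.toAffineIsometryEquiv
  have he : ∀ x, ‖e x‖ = dist x c := fun x => by
    rw [← dist_zero_right, ← e.dist_map x c]
    simp [e]
  rw [← s.card_image_of_injective e.injective]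
  refine Complex.card_le_six_of_norm_eq_one _ ?_ ?_
  · simpa [he] using hs
  · rw [Finset.coe_image]
    rintro _ ⟨x, hx, rfl⟩ _ ⟨y, hy, rfl⟩ hxy
    rw [← dist_eq_norm, e.dist_map]
    exact hsep hx hy (ne_of_apply_ne e hxy)

theorem encard_setOf_dist_eq_and_dist_eq_le_two (hd : finrank ℝ V = 2) {c₁ c₂ : P}
    (hc : c₁ ≠ c₂) (r₁ r₂ : ℝ) : {p | dist p c₁ = r₁ ∧ dist p c₂ = r₂}.encard ≤ 2 := by
  have : FiniteDimensional ℝ V := Module.finite_of_finrank_eq_succ hd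
  set S := {p | dist p c₁ = r₁ ∧ dist p c₂ = r₂}
  by_contra! h
  obtain ⟨p₁, p₂, hp₁, hp₂, hp₁₂⟩ := Set.one_lt_encard_iff.mp (h.trans' (by norm_num))
  have hS : S ⊆ {p₁, p₂} := fun p hp =>
    eq_of_dist_eq_of_dist_eq_of_finrank_eq_two hd hc hp₁₂ hp₁.1 hp₂.1 hp.1 hp₁.2 hp₂.2 hp.2
  exact h.not_ge ((Set.encard_le_encard hS).trans (Set.encard_pair hp₁₂).le)

end EuclideanGeometry

namespace SimpleGraph

variable {V : Type*} {G : SimpleGraph V}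

theorem adj_of_reachable_compl_of_not_reachable_compl {u a b : V} (ha : Gᶜ.Reachable u a)
    (hb : ¬Gᶜ.Reachable u b) : G.Adj a b := by
  by_contra hab
  have hne : a ≠ b := fun h => hb (h ▸ ha)
  exact hb (ha.trans (compl_adj G a b |>.mpr ⟨hne, hab⟩).reachable)

theorem exists_forall_adj_of_not_connected_compl [Finite V] (hV : 5 ≤ Nat.card V)
    (h23 : ∀ a b, a ≠ b → (G.commonNeighbors a b).encard ≤ 2) (h : ¬Gᶜ.Connected) :
    ∃ i, ∀ j, j ≠ i → G.Adj i j := by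
  have : Nonempty V := (Nat.card_pos_iff.mp (by omega)).1
  obtain ⟨u, v, huv⟩ : ∃ u v, ¬Gᶜ.Reachable u v := by
    by_contra! h'
    exact h ⟨h'⟩
  set A := {x | Gᶜ.Reachable u x}
  have hAB : ∀ a ∈ A, ∀ b ∈ Aᶜ, G.Adj a b := fun _ ha _ hb =>
    adj_of_reachable_compl_of_not_reachable_compl ha hb
  have hu : u ∈ A := Reachable.refl u
  by_cases hA : A.Nontrivial
  · by_cases hB : Aᶜ.Nontrivial
    · exfalso
      obtain ⟨a, ha, a', ha', haa'⟩ := hA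
      obtain ⟨b, hb, b', hb', hbb'⟩ := hB
      have hA2 : A.encard ≤ 2 := (h23 b b' hbb').trans' <| Set.encard_le_encard fun x hx =>
        show x ∈ G.commonNeighbors b b' from ⟨(hAB x hx b hb).symm, (hAB x hx b' hb').symm⟩
      have hB2 : Aᶜ.encard ≤ 2 := (h23 a a' haa').trans' <| Set.encard_le_encard fun y hy =>
        show y ∈ G.commonNeighbors a a' from ⟨hAB a ha y hy, hAB a' ha' y hy⟩
      have hcard := Set.encard_add_encard_compl A
      rw [Set.encard_univ, ENat.card_eq_coe_natCard] at hcard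
      have : (Nat.card V : ℕ∞) ≤ 4 := hcard ▸ (add_le_add hA2 hB2).trans (by norm_num)
      norm_cast at this
      omega
    · refine ⟨v, fun j hj => (hAB j ?_ v huv).symm⟩
      by_contra hjA
      exact hj (Set.not_nontrivial_iff.mp hB hjA huv)
  · exact ⟨u, fun j hj => hAB u hu j fun hjA => hj (Set.not_nontrivial_iff.mp hA hjA hu)⟩

end SimpleGraph

theorem encard_commonNeighbors_le_two_of_adj_dist_eq_one {ι V P : Type*}
    [NormedAddCommGroup V] [InnerProductSpace ℝ V] [MetricSpace P] [NormedAddTorsor V P]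
    (hd : finrank ℝ V = 2) {p : ι → P} (hp : Function.Injective p) {G : SimpleGraph ι}
    (hG : ∀ i j, G.Adj i j → dist (p i) (p j) = 1) {a b : ι} (hab : a ≠ b) :
    (G.commonNeighbors a b).encard ≤ 2 := by
  rw [← hp.injOn.encard_image]
  refine (Set.encard_le_encard ?_).trans
    (EuclideanGeometry.encard_setOf_dist_eq_and_dist_eq_le_two hd (hp.ne hab) 1 1)
  rintro _ ⟨k, ⟨hak, hbk⟩, rfl⟩
  exact ⟨dist_comm (p a) (p k) ▸ hG a k hak, dist_comm (p b) (p k) ▸ hG b k hbk⟩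

theorem penny_graph_complement_disconnected_general
    (n : ℕ) (hn : 5 ≤ n)
    (p : Fin n → EuclideanSpace ℝ (Fin 2))
    (hsep : ∀ i j, i ≠ j → 1 ≤ dist (p i) (p j))
    (G : SimpleGraph (Fin n))
    (hG : ∀ i j, G.Adj i j ↔ (i ≠ j ∧ dist (p i) (p j) = 1))
    (hconn : ¬ Gᶜ.Connected) :
    (n = 5 ∨ n = 6 ∨ n = 7) ∧ ∃ i : Fin n, ∀ j, j ≠ i → G.Adj i j := by
  have hd : finrank ℝ (EuclideanSpace ℝ (Fin 2)) = 2 := finrank_euclideanSpace_fin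
  have hp : Function.Injective p := fun i j hij => by
    by_contra hne
    have := hsep i j hne
    rw [hij, dist_self] at this
    exact zero_lt_one.not_ge this
  have hunit : ∀ i j, G.Adj i j → dist (p i) (p j) = 1 := fun i j h => ((hG i j).1 h).2
  obtain ⟨i, hi⟩ := G.exists_forall_adj_of_not_connected_compl (by simpa using hn)
    (fun a b hab => encard_commonNeighbors_le_two_of_adj_dist_eq_one hd hp hunit hab) hconn
  have hkiss := EuclideanGeometry.card_le_six_of_dist_eq_one hd
    ((Finset.univ.erase i).image p) (p i)
    (by simpa [dist_comm] using fun j hj => hunit i j (hi j hj))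
    (by
      rw [Finset.coe_image]
      rintro _ ⟨j, -, rfl⟩ _ ⟨k, -, rfl⟩ hjk
      exact hsep j k (ne_of_apply_ne p hjk))
  rw [Finset.card_image_of_injective _ hp, Finset.card_erase_of_mem (Finset.mem_univ i),
    Finset.card_univ, Fintype.card_fin] at hkiss
  exact ⟨by omega, i, hi⟩

theorem penny_graph_complement_disconnected
    (n : ℕ) (hn : 5 ≤ n)
    (p : Fin n → EuclideanSpace ℝ (Fin 2))
    (hsep : ∀ i j, i ≠ j → 1 ≤ dist (p i) (p j))
    (G : SimpleGraph (Fin n)) [DecidableRel G.Adj]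
    (hG : ∀ i j, G.Adj i j ↔ (i ≠ j ∧ dist (p i) (p j) = 1))
    (hconn : ¬ Gᶜ.Connected) :
    (n = 5 ∨ n = 6 ∨ n = 7) ∧ ∃ i : Fin n, ∀ j, j ≠ i → G.Adj i j :=
  penny_graph_complement_disconnected_general n hn p hsep G hG hconn
end

section
/- Let D be an n×n EDM with n ≥ 5 generated by points in the plane with pairwise distances ≥ 1 (a penny graph realization), and let M = E − D. Then M has exactly one negative eigenvalue, counted with multiplicity. -/
/-!
On the hyperplane `∑ xᵢ = 0` the form of `E` vanishes and `-xᵀ D x = 2 ‖∑ xᵢ pᵢ‖² ≥ 0`, so `M` is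
positive semidefinite on a hyperplane and has at most one negative eigenvalue. If it had none,
testing `M` on `eᵢ + eⱼ` would give `‖pᵢ - pⱼ‖² ≤ 2` for all pairs. But five points of the plane
cannot have all their distances in `[1, √2]`: seen from one of them, the other four lie in
directions making pairwise angles in `[arccos (3/4), π/2]`. Measured from one of these
directions, all arguments lie in `[-π/2, π/2]`, so angles are differences of arguments, and the two
extreme directions would make an angle of at least `3 arccos (3/4) > π/2`.
-/

open Finset InnerProductGeometry Real Matrix

theorem Finset.exists_card_sub_one_mul_le_sub {s : Finset ℝ} (hs : s.Nonempty) {α : ℝ}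
    (h : ∀ x ∈ s, ∀ y ∈ s, x < y → α ≤ y - x) :
    ∃ x ∈ s, ∃ y ∈ s, ((#s : ℝ) - 1) * α ≤ y - x := by
  induction s using Finset.induction_on_max with
  | empty => exact absurd hs Finset.not_nonempty_empty
  | insert a s has ih =>
    rcases s.eq_empty_or_nonempty with rfl | hne
    · exact ⟨a, mem_insert_self a ∅, a, mem_insert_self a ∅, by simp⟩
    obtain ⟨x, hx, y, hy, hxy⟩ :=
      ih hne fun x hx y hy => h x (mem_insert_of_mem hx) y (mem_insert_of_mem hy)
    have hya := h y (mem_insert_of_mem hy) a (mem_insert_self a s) (has y hy)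
    refine ⟨x, mem_insert_of_mem hx, a, mem_insert_self a s, ?_⟩
    rw [card_insert_of_notMem fun ha => (has a ha).false]
    push_cast
    linarith

theorem three_mul_le_of_pairwise_abs_sub_mem_Icc {θ : Fin 4 → ℝ} {α β : ℝ} (hα : 0 < α)
    (h : Pairwise fun i j => |θ i - θ j| ∈ Set.Icc α β) : 3 * α ≤ β := by
  have hinj : Function.Injective θ := fun i j hθ => by
    by_contra hij
    have := (h hij).1
    rw [hθ, sub_self, abs_zero] at this
    linarith
  have hgap : ∀ x ∈ univ.image θ, ∀ y ∈ univ.image θ, x < y → α ≤ y - x := by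
    intro x hx y hy hlt
    obtain ⟨i, -, rfl⟩ := mem_image.1 hx
    obtain ⟨j, -, rfl⟩ := mem_image.1 hy
    have hji := (h (ne_of_apply_ne θ hlt.ne')).1
    rwa [abs_of_pos (sub_pos.2 hlt)] at hji
  obtain ⟨_, hx, _, hy, hxy⟩ := (univ.image θ).exists_card_sub_one_mul_le_sub
    (univ_nonempty.image θ) hgap
  obtain ⟨i, -, rfl⟩ := mem_image.1 hx
  obtain ⟨j, -, rfl⟩ := mem_image.1 hy
  rw [card_image_of_injective _ hinj, card_univ, Fintype.card_fin] at hxy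
  norm_num at hxy
  have hji : j ≠ i := by
    rintro rfl
    linarith
  linarith [le_abs_self (θ j - θ i), (h hji).2]

theorem pi_div_six_lt_arccos_three_div_four : π / 6 < arccos (3 / 4) := by
  rw [← arccos_cos (by positivity) (by linarith [pi_pos] : π / 6 ≤ π), cos_pi_div_six]
  have hlo : 3 / 2 < √3 := by
    rw [lt_sqrt (by norm_num)]
    norm_num
  have hhi : √3 ≤ 2 := by
    rw [sqrt_le_left (by norm_num)]
    norm_num
  exact arccos_lt_arccos (by norm_num) (by linarith) (by linarith)

theorem Complex.angle_eq_abs_arg_sub_arg {a b : ℂ} (ha : a ≠ 0) (hb : b ≠ 0)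
    (h : |a.arg - b.arg| ≤ π) : angle a b = |a.arg - b.arg| := by
  have hcos : inner ℝ a b / (‖a‖ * ‖b‖) = Real.cos (a.arg - b.arg) := by
    rw [Real.cos_sub, cos_arg ha, cos_arg hb, sin_arg, sin_arg, Complex.inner]
    simp only [Complex.mul_re, Complex.conj_re, Complex.conj_im]
    field_simp
    ring
  rw [angle, hcos, ← Real.cos_abs, arccos_cos (abs_nonneg _) h]

theorem Complex.not_pairwise_angle_mem_Icc {v : Fin 4 → ℂ} (hv : ∀ i, v i ≠ 0) {α : ℝ}
    (hα : π / 2 < 3 * α) : ¬ Pairwise fun i j => angle (v i) (v j) ∈ Set.Icc α (π / 2) := by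
  intro h
  set θ : Fin 4 → ℝ := fun i => (v i / v 0).arg
  have hw : ∀ i, v i / v 0 ≠ 0 := fun i => div_ne_zero (hv i) (hv 0)
  have hθ : ∀ i, |θ i| ≤ π / 2 := by
    intro i
    rcases eq_or_ne i 0 with rfl | hi
    · simp only [θ, arg_div_self, abs_zero]
      positivity
    · rw [← angle_one_right (hw i), angle_div_left_eq_angle_mul_right, one_mul]
      exact (h hi).2
  have hangle : ∀ i j, angle (v i) (v j) = |θ i - θ j| := by
    intro i j
    rw [← angle_mul_right (inv_ne_zero (hv 0)), ← div_eq_mul_inv, ← div_eq_mul_inv]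
    refine angle_eq_abs_arg_sub_arg (hw i) (hw j) ?_
    linarith [abs_sub (θ i) (θ j), hθ i, hθ j]
  have := three_mul_le_of_pairwise_abs_sub_mem_Icc (θ := θ) (β := π / 2)
    (by linarith [pi_pos]) fun i j hij => by simpa only [hangle] using h hij
  linarith

theorem angle_mem_Icc_arccos_of_sq_norm_mem_Icc {F : Type*} [NormedAddCommGroup F]
    [InnerProductSpace ℝ F] {u v : F} (hu : ‖u‖ ^ 2 ∈ Set.Icc 1 2) (hv : ‖v‖ ^ 2 ∈ Set.Icc 1 2)
    (huv : ‖u - v‖ ^ 2 ∈ Set.Icc 1 2) : angle u v ∈ Set.Icc (arccos (3 / 4)) (π / 2) := by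
  obtain ⟨hu1, hu2⟩ := hu
  obtain ⟨hv1, hv2⟩ := hv
  obtain ⟨huv1, huv2⟩ := huv
  have hcos := norm_sub_sq_real u v
  have hu0 : 1 ≤ ‖u‖ := by nlinarith [norm_nonneg u]
  have hv0 : 1 ≤ ‖v‖ := by nlinarith [norm_nonneg v]
  have hnorm : 0 < ‖u‖ * ‖v‖ := by positivity
  constructor
  -- the constant `3 / 4` is attained at `‖u‖ ^ 2 = ‖v‖ ^ 2 = 2`, `‖u - v‖ ^ 2 = 1`
  · refine arccos_le_arccos ((div_le_iff₀ hnorm).2 ?_)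
    nlinarith [mul_nonneg (sub_nonneg.2 hu0) (sub_nonneg.2 hv0)]
  · exact arccos_le_pi_div_two.2 (div_nonneg (by linarith) hnorm.le)

theorem exists_two_lt_dist_sq_of_pairwise_one_le_dist (p : Fin 5 → EuclideanSpace ℝ (Fin 2))
    (hp : Pairwise fun i j => 1 ≤ dist (p i) (p j)) : ∃ i j, 2 < dist (p i) (p j) ^ 2 := by
  by_contra! h
  have hsq : Pairwise fun i j => dist (p i) (p j) ^ 2 ∈ Set.Icc 1 2 :=
    fun i j hij => ⟨one_le_pow₀ (hp hij), h i j⟩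
  let e := Complex.orthonormalBasisOneI.repr.symm.toLinearIsometry
  let u : Fin 4 → EuclideanSpace ℝ (Fin 2) := fun i => p i.succ - p 0
  have hu : ∀ i, ‖u i‖ ^ 2 ∈ Set.Icc 1 2 := fun i => by
    simpa only [u, ← dist_eq_norm] using hsq (Fin.succ_ne_zero i)
  refine Complex.not_pairwise_angle_mem_Icc (v := fun i => e (u i)) (fun i => ?_)
    (α := arccos (3 / 4)) (by linarith [pi_div_six_lt_arccos_three_div_four]) fun i j hij => ?_
  · rw [← norm_ne_zero_iff, e.norm_map, ← pow_ne_zero_iff two_ne_zero]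
    exact (zero_lt_one.trans_le (hu i).1).ne'
  · dsimp only
    rw [e.angle_map]
    refine angle_mem_Icc_arccos_of_sq_norm_mem_Icc (hu i) (hu j) ?_
    simpa only [u, sub_sub_sub_cancel_right, ← dist_eq_norm] using
      hsq (Fin.succ_injective _ |>.ne hij)

theorem dotProduct_mulVec_eq_neg_two_mul_norm_sq_of_sum_eq_zero {ι F : Type*} [Fintype ι]
    [NormedAddCommGroup F] [InnerProductSpace ℝ F] {p : ι → F} {D : Matrix ι ι ℝ}
    (hD : ∀ i j, D i j = dist (p i) (p j) ^ 2) {x : ι → ℝ} (hx : ∑ i, x i = 0) :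
    x ⬝ᵥ D *ᵥ x = -2 * ‖∑ i, x i • p i‖ ^ 2 := by
  have hgram : ‖∑ i, x i • p i‖ ^ 2 = ∑ i, ∑ j, x i * x j * inner ℝ (p i) (p j) := by
    simp_rw [← real_inner_self_eq_norm_sq, sum_inner, inner_sum, real_inner_smul_left,
      real_inner_smul_right]
    exact sum_congr rfl fun i _ => sum_congr rfl fun j _ => by ring
  have hleft : ∑ i, ∑ j, x i * ‖p i‖ ^ 2 * x j = 0 := by
    simp_rw [← mul_sum, hx, mul_zero, sum_const_zero]
  have hright : ∑ i, ∑ j, x i * ‖p j‖ ^ 2 * x j = 0 := by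
    simp_rw [mul_assoc, ← mul_sum, ← sum_mul, hx, zero_mul]
  calc x ⬝ᵥ D *ᵥ x
      = ∑ i, ∑ j, (x i * ‖p i‖ ^ 2 * x j + x i * ‖p j‖ ^ 2 * x j
          + -2 * (x i * x j * inner ℝ (p i) (p j))) := by
        simp only [dotProduct, mulVec, hD, dist_eq_norm, norm_sub_sq_real, mul_sum]
        exact sum_congr rfl fun i _ => sum_congr rfl fun j _ => by ring
    _ = -2 * ‖∑ i, x i • p i‖ ^ 2 := by
        rw [hgram, mul_sum]
        simp only [sum_add_distrib]
        rw [hleft, hright, zero_add, zero_add]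
        simp only [mul_sum]

theorem Matrix.IsHermitian.card_filter_eigenvalues_neg_le_one {ι : Type*} [Fintype ι]
    [DecidableEq ι] {A : Matrix ι ι ℝ} (hA : A.IsHermitian) (ℓ : ι → ℝ)
    (h : ∀ x, ℓ ⬝ᵥ x = 0 → 0 ≤ x ⬝ᵥ A *ᵥ x) : #{i | hA.eigenvalues i < 0} ≤ 1 := by
  rw [card_le_one]
  intro i hi j hj
  by_contra hij
  simp only [mem_filter, mem_univ, true_and] at hi hj
  have horth : ∀ k l, (hA.eigenvectorBasis k).ofLp ⬝ᵥ (hA.eigenvectorBasis l).ofLp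
      = if k = l then 1 else 0 := fun k l => by
    rw [← orthonormal_iff_ite.1 hA.eigenvectorBasis.orthonormal k l,
      EuclideanSpace.inner_eq_star_dotProduct, star_trivial, dotProduct_comm]
  set v : ι → ℝ := (hA.eigenvectorBasis i).ofLp
  set w : ι → ℝ := (hA.eigenvectorBasis j).ofLp
  have hvv : v ⬝ᵥ v = 1 := by simp [v, horth]
  have hww : w ⬝ᵥ w = 1 := by simp [w, horth]
  have hvw : v ⬝ᵥ w = 0 := by simp [v, w, horth, hij]
  have hwv : w ⬝ᵥ v = 0 := by rw [dotProduct_comm, hvw]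
  have hquad : ∀ a b : ℝ, (a • v + b • w) ⬝ᵥ A *ᵥ (a • v + b • w)
      = a ^ 2 * hA.eigenvalues i + b ^ 2 * hA.eigenvalues j := fun a b => by
    simp only [mulVec_add, mulVec_smul, hA.mulVec_eigenvectorBasis, v, w, add_dotProduct,
      dotProduct_add, smul_dotProduct, dotProduct_smul, hvv, hww, hvw, hwv, smul_eq_mul]
    ring
  -- the form is negative definite on `span {v, w}`, which meets the hyperplane `ℓ ⬝ᵥ x = 0`
  by_cases hv : ℓ ⬝ᵥ v = 0
  · have := h ((1 : ℝ) • v + (0 : ℝ) • w) (by simp [hv])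
    rw [hquad] at this
    linarith
  · have := h ((ℓ ⬝ᵥ w) • v + (-(ℓ ⬝ᵥ v)) • w)
      (by simp only [dotProduct_add, dotProduct_smul, smul_eq_mul]; ring)
    rw [hquad] at this
    nlinarith [sq_pos_of_ne_zero hv, sq_nonneg (ℓ ⬝ᵥ w)]

theorem Matrix.IsHermitian.exists_eigenvalue_neg {ι : Type*} [Fintype ι] [DecidableEq ι]
    {A : Matrix ι ι ℝ} (hA : A.IsHermitian) {x : ι → ℝ} (hx : x ⬝ᵥ A *ᵥ x < 0) :
    ∃ i, hA.eigenvalues i < 0 := by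
  by_contra! h
  exact hx.not_ge ((hA.posSemidef_iff_eigenvalues_nonneg.2 h).dotProduct_mulVec_nonneg x)

theorem Matrix.dotProduct_mulVec_single_add_single {ι R : Type*} [Fintype ι] [DecidableEq ι]
    [CommRing R] (A : Matrix ι ι R) (i j : ι) :
    (Pi.single i 1 + Pi.single j 1 : ι → R) ⬝ᵥ A *ᵥ (Pi.single i 1 + Pi.single j 1)
      = A i i + A i j + A j i + A j j := by
  simp only [mulVec_add, mulVec_single, MulOpposite.op_one, one_smul, dotProduct_add,
    add_dotProduct, single_dotProduct, col_apply, one_mul]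
  ring

theorem penny_EDM_one_negative_eigenvalue
    (n : ℕ) (hn : 5 ≤ n)
    (p : Fin n → EuclideanSpace ℝ (Fin 2))
    (hsep : ∀ i j, i ≠ j → 1 ≤ dist (p i) (p j))
    (D E M : Matrix (Fin n) (Fin n) ℝ)
    (hD : ∀ i j, D i j = dist (p i) (p j) ^ 2)
    (hE : ∀ i j, E i j = 1) (hM : M = E - D)
    (hHerm : M.IsHermitian) :
    (Finset.univ.filter (fun i => hHerm.eigenvalues i < 0)).card = 1 := by
  refine le_antisymm (hHerm.card_filter_eigenvalues_neg_le_one 1 fun x hx => ?_) ?_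
  · have hsum : ∑ i, x i = 0 := by simpa [one_dotProduct] using hx
    have hEx : E *ᵥ x = 0 := funext fun i => by simp [mulVec, dotProduct, hE, hsum]
    rw [hM, sub_mulVec, hEx, zero_sub, dotProduct_neg,
      dotProduct_mulVec_eq_neg_two_mul_norm_sq_of_sum_eq_zero hD hsum, neg_mul, neg_neg]
    positivity
  · have hMij : ∀ i j, M i j = 1 - dist (p i) (p j) ^ 2 := fun i j => by
      rw [hM, Matrix.sub_apply, hE, hD]
    obtain ⟨i, j, hij⟩ := exists_two_lt_dist_sq_of_pairwise_one_le_dist (p ∘ Fin.castLE hn)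
      fun i j h => hsep _ _ ((Fin.castLE_injective hn).ne h)
    set x : Fin n → ℝ := Pi.single (Fin.castLE hn i) 1 + Pi.single (Fin.castLE hn j) 1
    have hx : x ⬝ᵥ M *ᵥ x < 0 := by
      simp only [x, dotProduct_mulVec_single_add_single, hMij, dist_self]
      rw [dist_comm (p (Fin.castLE hn j))]
      dsimp only [Function.comp_apply] at hij
      linarith
    obtain ⟨k, hk⟩ := hHerm.exists_eigenvalue_neg hx
    exact card_pos.2 ⟨k, mem_filter.2 ⟨mem_univ k, hk⟩⟩
end
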